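/- Strong asymmetric amalgamation: let A, B, C be L-structures, with A immersed in B via i : A → B and strongly immersed in C via j : A → C. Then there exist an L-structure D, a strong immersion f' : B → D and an immersion g' : C → D with f' ∘ i = g' ∘ j, such that f'(b) ≠ g'(c) for all b ∈ B \ i(A) and c ∈ C \ j(A). -/

import Mathlib

/-!
The amalgam `D` is a model, obtained by compactness, of `T_i(B) ∪ Diag⁺(B)`, of the positive
diagram of `C` together with the negations of the positive `L(C)`-sentences false in `C` (this
makes `C → D` an immersion), and of `i a = j a`, `b ≠ c` for `b ∉ i(A)`, `c ∉ j(A)`.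
A finite part of this theory holds in `B` itself: as `j` is a strong immersion, the finitely many
facts about `C` that it mentions, over parameters from `j(A)`, are realised in `A` along a
retraction `ρ : C → A` of `j`. Interpreting `c ∈ C` as `i (ρ c) ∈ i(A)` then keeps it apart from
every `b ∉ i(A)`, and the immersion `i` carries the truth values from `A` to `B`.
If `A` is empty, so are `B` and `C`, and `B` is already the amalgam.
-/

open FirstOrder FirstOrder.Language

universe u v w w'

namespace PositiveLogic

/-- Positive formulas with `n` free variables: built from `⊥`, atomic formulas,
`∧`, `∨` and `∃`. -/
inductive PosForm (L : FirstOrder.Language.{u, v}) : ℕ → Type (max u v)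
  | falsum {n : ℕ} : PosForm L n
  | equal {n : ℕ} (t u : L.Term (Fin n)) : PosForm L n
  | rel {n l : ℕ} (R : L.Relations l) (ts : Fin l → L.Term (Fin n)) : PosForm L n
  | and {n : ℕ} (φ ψ : PosForm L n) : PosForm L n
  | or {n : ℕ} (φ ψ : PosForm L n) : PosForm L n
  | ex {n : ℕ} (φ : PosForm L (n + 1)) : PosForm L n

variable {L : FirstOrder.Language.{u, v}}

/-- Realization of a positive formula in a structure. -/
def PosForm.Realize {M : Type w} [L.Structure M] :
    ∀ {n : ℕ}, PosForm L n → (Fin n → M) → Prop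
  | _, .falsum, _ => False
  | _, .equal t u, v => t.realize v = u.realize v
  | _, .rel R ts, v => Structure.RelMap R fun i => (ts i).realize v
  | _, .and φ ψ, v => φ.Realize v ∧ ψ.Realize v
  | _, .or φ ψ, v => φ.Realize v ∨ ψ.Realize v
  | _, .ex φ, v => ∃ x : M, φ.Realize (Fin.snoc v x)

/-- A positive sentence `φ` (element of `PosForm L 0`) holds in `M`. -/
def PosRealize (M : Type w) [L.Structure M] (φ : PosForm L 0) : Prop :=
  φ.Realize (Fin.elim0 : Fin 0 → M)

/-- `Diag⁺*(M)`: the set of positive `L`-sentences true in `M`. -/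
def posTheory (M : Type w) [L.Structure M] : Set (PosForm L 0) :=
  {φ | PosRealize M φ}

/-- `T_u*(M)`, identified with the set of positive `L`-sentences whose negation
(an h-universal sentence) is true in `M`. -/
def TuStar (M : Type w) [L.Structure M] : Set (PosForm L 0) :=
  {φ | ¬ PosRealize M φ}

/-- A basic h-inductive sentence `∀ x̄ (φ(x̄) → ψ(x̄))` with `φ, ψ` positive.
(A general h-inductive sentence, a finite conjunction of such, is equivalent to
the set of its conjuncts.) -/
structure HInd (L : FirstOrder.Language.{u, v}) : Type (max u v) where
  n : ℕ
  hyp : PosForm L n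
  concl : PosForm L n

/-- Realization of a basic h-inductive sentence. -/
def HInd.Realize (s : HInd L) (M : Type w) [L.Structure M] : Prop :=
  ∀ v : Fin s.n → M, s.hyp.Realize v → s.concl.Realize v

/-- `M` is a model of the h-inductive theory `T`. -/
def HModels (M : Type w) [L.Structure M] (T : Set (HInd L)) : Prop :=
  ∀ s ∈ T, s.Realize M

/-- `T_i*(M)`: the set of (basic) h-inductive `L`-sentences true in `M`. -/
def TiStar (M : Type w) [L.Structure M] : Set (HInd L) :=
  {s | s.Realize M}

/-- `T_u(T)`: the h-universal consequences of `T`, identified with the set of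
positive sentences `φ` such that `¬φ` holds in every model of `T`. -/
def TuOf (T : Set (HInd L)) : Set (PosForm L 0) :=
  {φ | ∀ (M : Type (max u v)) [L.Structure M], HModels M T → ¬ PosRealize M φ}

/-- A homomorphism is an immersion if it preserves and reflects all positive
formulas. -/
def IsImmersion {A : Type w} {B : Type w'} [L.Structure A] [L.Structure B]
    (f : A →[L] B) : Prop :=
  ∀ {n : ℕ} (φ : PosForm L n) (v : Fin n → A), φ.Realize v ↔ φ.Realize (f ∘ v)

/-- A homomorphism `f : A → B` is a strong immersion if `B`, with parameters
from `A` interpreted via `f`, models `T_i(A)`, the full h-inductive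
`L(A)`-theory of `A`. -/
def IsStrongImmersion {A : Type w} {B : Type w'} [L.Structure A] [L.Structure B]
    (f : A →[L] B) : Prop :=
  ∀ {n m : ℕ} (φ ψ : PosForm L (n + m)) (a : Fin m → A),
    (∀ v : Fin n → A, φ.Realize (Fin.append v a) → ψ.Realize (Fin.append v a)) →
    ∀ v : Fin n → B, φ.Realize (Fin.append v (f ∘ a)) → ψ.Realize (Fin.append v (f ∘ a))

/-- `M` is a positively closed (pc) model of `T`: it models `T` and every
homomorphism from `M` into a model of `T` is an immersion. -/
def IsPC (T : Set (HInd L)) (M : Type (max u v)) [L.Structure M] : Prop :=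
  HModels M T ∧
    ∀ (N : Type (max u v)) [L.Structure N], HModels N T → ∀ f : M →[L] N, IsImmersion f

/-- `T` has the joint continuation property (is positively complete). -/
def JCP (T : Set (HInd L)) : Prop :=
  ∀ (A : Type (max u v)) [L.Structure A] (B : Type (max u v)) [L.Structure B],
    HModels A T → HModels B T →
      ∃ (C : Type (max u v)) (_ : L.Structure C),
        HModels C T ∧ Nonempty (A →[L] C) ∧ Nonempty (B →[L] C)

/-- `T₁` and `T₂` are `T`-complete. -/
def TComplete (T₁ T₂ T : Set (HInd L)) : Prop :=
  ∀ (A : Type (max u v)) [L.Structure A] (B : Type (max u v)) [L.Structure B],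
    HModels A T₁ → HModels B T₂ →
      ∃ (C : Type (max u v)) (_ : L.Structure C),
        HModels C T ∧ Nonempty (A →[L] C) ∧ Nonempty (B →[L] C)

namespace PosForm

variable {M : Type w} [L.Structure M]

def nonempty (n : ℕ) : PosForm L n :=
  .ex (.equal (.var (Fin.last n)) (.var (Fin.last n)))

@[simp]
theorem realize_nonempty {n : ℕ} (v : Fin n → M) :
    (nonempty n : PosForm L n).Realize v ↔ Nonempty M :=
  ⟨fun ⟨x, _⟩ => ⟨x⟩, fun ⟨x⟩ => ⟨x, rfl⟩⟩

def relabel : ∀ {n : ℕ}, PosForm L n → ∀ {k : ℕ}, (Fin n → Fin k) → PosForm L k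
  | _, .falsum, _, _ => .falsum
  | _, .equal t u, _, g => .equal (t.relabel g) (u.relabel g)
  | _, .rel R ts, _, g => .rel R fun i => (ts i).relabel g
  | _, .and φ ψ, _, g => .and (φ.relabel g) (ψ.relabel g)
  | _, .or φ ψ, _, g => .or (φ.relabel g) (ψ.relabel g)
  | _, .ex φ, k, g => .ex (φ.relabel (Fin.snoc (Fin.castSucc ∘ g) (Fin.last k)))

@[simp]
theorem realize_relabel :
    ∀ {n : ℕ} (φ : PosForm L n) {k : ℕ} (g : Fin n → Fin k) (v : Fin k → M),
      (φ.relabel g).Realize v ↔ φ.Realize (v ∘ g)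
  | _, .falsum, _, _, _ => Iff.rfl
  | _, .equal t u, _, g, v => by simp [relabel, Realize, Term.realize_relabel]
  | _, .rel R ts, _, g, v => by simp [relabel, Realize, Term.realize_relabel]
  | _, .and φ ψ, _, g, v => and_congr (realize_relabel φ g v) (realize_relabel ψ g v)
  | _, .or φ ψ, _, g, v => or_congr (realize_relabel φ g v) (realize_relabel ψ g v)
  | _, .ex φ, _, g, v => exists_congr fun x => by
      rw [realize_relabel φ]
      congr! 1
      ext k
      induction k using Fin.lastCases <;> simp

def conj {n : ℕ} (l : List (PosForm L n)) : PosForm L n :=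
  l.foldr .and (nonempty n)

def disj {n : ℕ} (l : List (PosForm L n)) : PosForm L n :=
  l.foldr .or .falsum

theorem realize_conj [Nonempty M] {n : ℕ} (l : List (PosForm L n)) (v : Fin n → M) :
    (conj l).Realize v ↔ ∀ φ ∈ l, φ.Realize v := by
  induction l with
  | nil => simpa [conj]
  | cons φ l ih => simp [conj, Realize, ← ih]

theorem realize_disj {n : ℕ} (l : List (PosForm L n)) (v : Fin n → M) :
    (disj l).Realize v ↔ ∃ φ ∈ l, φ.Realize v := by
  induction l with
  | nil => simp [disj, Realize]
  | cons φ l ih => simp [disj, Realize, ← ih]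

theorem Realize.map {N : Type w'} [L.Structure N] (f : M →[L] N) :
    ∀ {n : ℕ} {φ : PosForm L n} {v : Fin n → M}, φ.Realize v → φ.Realize (f ∘ v)
  | _, .falsum, _, h => h
  | _, .equal _ _, _, h => by simp only [Realize, HomClass.realize_term] at h ⊢; rw [h]
  | _, .rel _ _, _, h => by
      simp only [Realize, HomClass.realize_term]
      exact f.map_rel _ _ h
  | _, .and _ _, _, h => ⟨h.1.map f, h.2.map f⟩
  | _, .or _ _, _, h => h.imp (·.map f) (·.map f)
  | _, .ex _, _, h => by
      obtain ⟨x, hx⟩ := h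
      exact ⟨f x, by simpa only [Fin.comp_snoc] using hx.map f⟩

/-- The first-order formula expressing `φ`, where `σ` sends each variable of `φ` to a free
variable or to a bound one. -/
def toBoundedFormula {α : Type w'} : ∀ {k : ℕ}, PosForm L k → ∀ {n : ℕ}, (Fin k → α ⊕ Fin n) →
    L.BoundedFormula α n
  | _, .falsum, _, _ => ⊥
  | _, .equal t u, _, σ => (t.relabel σ).bdEqual (u.relabel σ)
  | _, .rel R ts, _, σ => R.boundedFormula fun i => (ts i).relabel σ
  | _, .and φ ψ, _, σ => φ.toBoundedFormula σ ⊓ ψ.toBoundedFormula σ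
  | _, .or φ ψ, _, σ => φ.toBoundedFormula σ ⊔ ψ.toBoundedFormula σ
  | _, .ex φ, n, σ =>
      (φ.toBoundedFormula (Fin.snoc (Sum.map id Fin.castSucc ∘ σ) (.inr (Fin.last n)))).ex

@[simp]
theorem realize_toBoundedFormula {α : Type w'} :
    ∀ {k : ℕ} (φ : PosForm L k) {n : ℕ} (σ : Fin k → α ⊕ Fin n) (w : α → M) (xs : Fin n → M),
      (φ.toBoundedFormula σ).Realize w xs ↔ φ.Realize (Sum.elim w xs ∘ σ)
  | _, .falsum, _, _, _, _ => Iff.rfl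
  | _, .equal t u, _, σ, w, xs => by simp [toBoundedFormula, Realize, Term.realize_relabel]
  | _, .rel R ts, _, σ, w, xs => by simp [toBoundedFormula, Realize, Term.realize_relabel]
  | _, .and φ ψ, _, σ, w, xs => by
      simp [toBoundedFormula, Realize, realize_toBoundedFormula φ, realize_toBoundedFormula ψ]
  | _, .or φ ψ, _, σ, w, xs => by
      simp [toBoundedFormula, Realize, realize_toBoundedFormula φ, realize_toBoundedFormula ψ]
  | _, .ex φ, _, σ, w, xs => by
      simp only [toBoundedFormula, BoundedFormula.realize_ex, Realize, realize_toBoundedFormula φ]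
      refine exists_congr fun x => ?_
      congr! 1
      ext k
      induction k using Fin.lastCases with
      | last => simp
      | cast k => cases h : σ k <;> simp [h]

theorem realize_iff_of_isEmpty {N : Type w'} [L.Structure N] [IsEmpty M]
    (h : ∀ φ : PosForm L 0, PosRealize M φ ↔ PosRealize N φ) {n : ℕ} (φ : PosForm L n)
    (v : Fin n → M) (w : Fin n → N) : φ.Realize v ↔ φ.Realize w := by
  cases n with
  | zero => rw [Subsingleton.elim v Fin.elim0, Subsingleton.elim w Fin.elim0]; exact h φ
  | succ n => exact isEmptyElim (v 0)

end PosForm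

section Sentences

variable {α : Type w'} {M : Type w} [L.Structure M] [L[[α]].Structure M]
  [(L.lhomWithConstants α).IsExpansionOn M]

noncomputable def posSentence {n : ℕ} (φ : PosForm L n) (p : Fin n → α) : L[[α]].Sentence :=
  Formula.equivSentence (φ.toBoundedFormula (Sum.inl ∘ p) : L.Formula α)

/-- The h-inductive `L(α)`-sentence `∀ x̄, φ(x̄, p) → ψ(x̄, p)`. -/
noncomputable def hIndSentence {n m : ℕ} (φ ψ : PosForm L (n + m)) (p : Fin m → α) :
    L[[α]].Sentence :=
  let σ : Fin (n + m) → α ⊕ Fin n := Fin.append Sum.inr (Sum.inl ∘ p)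
  Formula.equivSentence ((φ.toBoundedFormula σ).imp (ψ.toBoundedFormula σ)).alls

@[simp]
theorem realize_posSentence {n : ℕ} (φ : PosForm L n) (p : Fin n → α) :
    M ⊨ posSentence φ p ↔ φ.Realize fun k => (L.con (p k) : M) := by
  simp [posSentence, Formula.Realize, Function.comp_def]

@[simp]
theorem realize_hIndSentence {n m : ℕ} (φ ψ : PosForm L (n + m)) (p : Fin m → α) :
    M ⊨ hIndSentence φ ψ p ↔ ∀ xs : Fin n → M,
      φ.Realize (Fin.append xs fun k => (L.con (p k) : M)) →
        ψ.Realize (Fin.append xs fun k => (L.con (p k) : M)) := by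
  have hσ (xs : Fin n → M) : Sum.elim (fun a => (L.con a : M)) xs ∘
      Fin.append Sum.inr (Sum.inl ∘ p) = Fin.append xs fun k => (L.con (p k) : M) := by
    ext k
    induction k using Fin.addCases <;> simp
  simp only [hIndSentence, Formula.realize_equivSentence, BoundedFormula.realize_alls,
    BoundedFormula.realize_imp, PosForm.realize_toBoundedFormula, hσ]

end Sentences

section Immersions

variable {A : Type w} {B : Type w'} [L.Structure A] [L.Structure B]

def homOfPreserves (f : A → B)
    (hf : ∀ {n : ℕ} (φ : PosForm L n) (v : Fin n → A), φ.Realize v → φ.Realize (f ∘ v)) :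
    A →[L] B where
  toFun := f
  map_fun' {l} F x := by
    have := hf (.equal (.func F fun k => .var (Fin.castSucc k)) (.var (Fin.last l)))
      (Fin.snoc x (Structure.funMap F x)) (by simp [PosForm.Realize])
    simpa [PosForm.Realize, Function.comp_def] using this.symm
  map_rel' R x hx := by
    simpa [PosForm.Realize, Function.comp_def] using hf (.rel R .var) x hx

theorem IsImmersion.posRealize_iff {i : A →[L] B} (hi : IsImmersion i) (φ : PosForm L 0) :
    PosRealize A φ ↔ PosRealize B φ := by
  rw [PosRealize, PosRealize, hi φ, Subsingleton.elim (i ∘ _) Fin.elim0]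

theorem IsImmersion.nonempty_iff {i : A →[L] B} (hi : IsImmersion i) :
    Nonempty A ↔ Nonempty B := by
  simpa [PosRealize] using hi.posRealize_iff (PosForm.nonempty 0)

theorem IsImmersion.injective {i : A →[L] B} (hi : IsImmersion i) : Function.Injective i :=
  fun a a' h => by
    simpa [PosForm.Realize, h] using (hi (.equal (.var 0) (.var 1)) ![a, a']).2

theorem IsStrongImmersion.exists_realize_and_not_realize {j : A →[L] B}
    (hj : IsStrongImmersion j) {n m : ℕ} {φ ψ : PosForm L (n + m)} {a : Fin m → A}
    {v : Fin n → B} (hφ : φ.Realize (Fin.append v (j ∘ a)))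
    (hψ : ¬ ψ.Realize (Fin.append v (j ∘ a))) :
    ∃ w : Fin n → A, φ.Realize (Fin.append w a) ∧ ¬ ψ.Realize (Fin.append w a) := by
  by_contra! h
  exact hψ (hj φ ψ a h v hφ)

theorem IsStrongImmersion.isImmersion {j : A →[L] B} (hj : IsStrongImmersion j) :
    IsImmersion j := by
  intro n φ a
  refine ⟨PosForm.Realize.map j, fun h => ?_⟩
  by_contra hna
  let φ' := φ.relabel (Fin.cast (Nat.zero_add n).symm)
  obtain ⟨w, hw, -⟩ := hj.exists_realize_and_not_realize (φ := φ') (ψ := .falsum) (a := a)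
    (v := Fin.elim0) (by simpa [φ', Fin.elim0_append, Function.comp_def] using h) id
  refine hna ?_
  simpa [φ', Subsingleton.elim w Fin.elim0, Fin.elim0_append, Function.comp_def] using hw

end Immersions

theorem exists_amalgam_of_isEmpty {A : Type w} {B : Type w'} {C : Type*} [L.Structure A]
    [L.Structure B] [L.Structure C] [IsEmpty A] (i : A →[L] B) (j : A →[L] C) (hi : IsImmersion i)
    (hj : IsStrongImmersion j) :
    ∃ (D : Type w') (_ : L.Structure D) (f' : B →[L] D) (g' : C →[L] D),
      IsStrongImmersion f' ∧ IsImmersion g' ∧ f'.comp i = g'.comp j ∧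
        ∀ b c, b ∉ Set.range i → c ∉ Set.range j → f' b ≠ g' c := by
  have hj' : IsImmersion j := hj.isImmersion
  have : IsEmpty C := not_nonempty_iff.1 (hj'.nonempty_iff.not.1 (not_nonempty_iff.2 ‹_›))
  have hCB (φ : PosForm L 0) : PosRealize C φ ↔ PosRealize B φ :=
    (hj'.posRealize_iff φ).symm.trans (hi.posRealize_iff φ)
  refine ⟨B, inferInstance, Hom.id L B,
    homOfPreserves isEmptyElim fun φ v => (PosForm.realize_iff_of_isEmpty hCB φ v _).1,
    fun _ _ _ h => h, fun φ v => PosForm.realize_iff_of_isEmpty hCB φ v _,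
    Hom.ext isEmptyElim, fun _ c => isEmptyElim c⟩

theorem exists_leftInverse_comp_append {α γ : Type*} [Nonempty α] {j : α → γ}
    (hj : Function.Injective j) {n m : ℕ} {v : Fin n → γ} (hv : Function.Injective v)
    (hvj : ∀ t, v t ∉ Set.range j) (w : Fin n → α) (a : Fin m → α) :
    ∃ ρ : γ → α, Function.LeftInverse ρ j ∧ ρ ∘ Fin.append v (j ∘ a) = Fin.append w a := by
  let ρ := Function.extend v w (Function.extend j id fun _ => Classical.arbitrary α)
  have hρj : Function.LeftInverse ρ j := fun x => by
    simp only [ρ]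
    rw [Function.extend_apply' _ _ _ fun ⟨t, ht⟩ => hvj t ⟨x, ht.symm⟩, hj.extend_apply, id]
  refine ⟨ρ, hρj, ?_⟩
  ext k
  induction k using Fin.addCases with
  | left t => simp [ρ, hv.extend_apply]
  | right t => simpa using hρj (a t)

theorem exists_injective_append_cover {α γ : Type*} {j : α → γ} (hj : Function.Injective j)
    (S : Finset γ) :
    ∃ (n m : ℕ) (v : Fin n → γ) (a : Fin m → α), Function.Injective v ∧
      (∀ t, v t ∉ Set.range j) ∧ ∀ x ∈ S, x ∈ Set.range (Fin.append v (j ∘ a)) := by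
  classical
  let S₁ := S.filter (· ∉ Set.range j)
  let S₂ := S.preimage j hj.injOn
  refine ⟨_, _, (↑) ∘ S₁.equivFin.symm, (↑) ∘ S₂.equivFin.symm,
    Subtype.val_injective.comp S₁.equivFin.symm.injective,
    fun t => (Finset.mem_filter.1 (S₁.equivFin.symm t).2).2, fun x hx => ?_⟩
  by_cases hxj : x ∈ Set.range j
  · obtain ⟨y, rfl⟩ := hxj
    exact ⟨Fin.natAdd _ (S₂.equivFin ⟨y, Finset.mem_preimage.2 hx⟩), by simp⟩
  · exact ⟨Fin.castAdd _ (S₁.equivFin ⟨x, Finset.mem_filter.2 ⟨hx, hxj⟩⟩), by simp⟩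

/-- A positive `L(M)`-sentence, i.e. a positive formula with parameters from `M`. -/
structure ParamPosSentence (L : FirstOrder.Language.{u, v}) (M : Type w) where
  {n : ℕ}
  formula : PosForm L n
  params : Fin n → M

section StrongImmersion

variable {A : Type w} {C : Type w'} [L.Structure A] [L.Structure C] [Nonempty A]
  {j : A →[L] C}

theorem IsStrongImmersion.exists_tuple_realize_iff (hj : IsStrongImmersion j) {n m : ℕ}
    (Φ : List (PosForm L (n + m))) (v : Fin n → C) (a : Fin m → A) :
    ∃ w : Fin n → A, ∀ φ ∈ Φ, φ.Realize (Fin.append w a) ↔ φ.Realize (Fin.append v (j ∘ a)) := by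
  classical
  have : Nonempty C := .map j ‹_›
  let c := Fin.append v (j ∘ a)
  -- `∀ x̄, ⋀ (members of Φ true at c) → ⋁ (members of Φ false at c)` fails in `C`, so in `A`.
  obtain ⟨w, hpos, hneg⟩ := hj.exists_realize_and_not_realize
    (φ := .conj (Φ.filter (·.Realize c)))
    (ψ := .disj (Φ.filter (¬ ·.Realize c))) (a := a) (v := v)
    (by simp [PosForm.realize_conj, c]) (by simp [PosForm.realize_disj, c])
  refine ⟨w, fun φ hφ => ?_⟩
  by_cases hc : φ.Realize c
  · exact iff_of_true ((PosForm.realize_conj _ _).1 hpos φ (by simp [hφ, hc])) hc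
  · exact iff_of_false (fun h => hneg ((PosForm.realize_disj _ _).2 ⟨φ, by simp [hφ, hc], h⟩)) hc

theorem IsStrongImmersion.exists_retraction (hj : IsStrongImmersion j)
    (l : List (ParamPosSentence L C)) :
    ∃ ρ : C → A, Function.LeftInverse ρ j ∧
      ∀ s ∈ l, s.formula.Realize (ρ ∘ s.params) ↔ s.formula.Realize s.params := by
  classical
  have hj_inj : Function.Injective j := IsImmersion.injective hj.isImmersion
  obtain ⟨n, m, v, a, hv, hvj, hcover⟩ := exists_injective_append_cover
    hj_inj (l.flatMap fun s => List.ofFn s.params).toFinset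
  have hparams (s) (hs : s ∈ l) : ∃ g : Fin s.n → Fin (n + m),
      s.params = Fin.append v (j ∘ a) ∘ g := by
    choose g hg using fun k => hcover (s.params k) (by simpa using ⟨s, hs, k, rfl⟩)
    exact ⟨g, funext fun k => (hg k).symm⟩
  choose g hg using hparams
  obtain ⟨w, hw⟩ := hj.exists_tuple_realize_iff
    (l.attach.map fun s => s.1.formula.relabel (g s.1 s.2)) v a
  obtain ⟨ρ, hρj, hρ⟩ := exists_leftInverse_comp_append hj_inj hv hvj w a
  refine ⟨ρ, hρj, fun s hs => ?_⟩
  have := hw _ (List.mem_map.2 ⟨⟨s, hs⟩, List.mem_attach _ _, rfl⟩)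
  rw [PosForm.realize_relabel, PosForm.realize_relabel, ← hρ] at this
  rw [hg s hs]
  exact this

end StrongImmersion

section AmalgamTheory

variable {A : Type w} {B C : Type w'} [L.Structure A] [L.Structure B] [L.Structure C]
  (i : A →[L] B) (j : A →[L] C)

/-- The conditions on the interpretation `ι` of the constants of `L(B ⊕ C)` expressed by
`amalgamTheory i j l`. -/
structure IsAmalgamMap (l : List (ParamPosSentence L C)) {M : Type*} [L.Structure M]
    (ι : B ⊕ C → M) : Prop where
  strong_left : ∀ {n m : ℕ} (φ ψ : PosForm L (n + m)) (b : Fin m → B),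
    (∀ v : Fin n → B, φ.Realize (Fin.append v b) → ψ.Realize (Fin.append v b)) →
      ∀ v : Fin n → M, φ.Realize (Fin.append v (ι ∘ .inl ∘ b)) →
        ψ.Realize (Fin.append v (ι ∘ .inl ∘ b))
  realize_left : ∀ {n : ℕ} (φ : PosForm L n) (b : Fin n → B),
    φ.Realize b → φ.Realize (ι ∘ .inl ∘ b)
  comm : ∀ a, ι (.inl (i a)) = ι (.inr (j a))
  disjoint : ∀ b c, b ∉ Set.range i → c ∉ Set.range j → ι (.inl b) ≠ ι (.inr c)
  realize_right_iff : ∀ s ∈ l,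
    s.formula.Realize (ι ∘ .inr ∘ s.params) ↔ s.formula.Realize s.params

open Classical in
noncomputable def ParamPosSentence.literal {α : Type*} (e : C → α) (s : ParamPosSentence L C) :
    L[[α]].Sentence :=
  if s.formula.Realize s.params then posSentence s.formula (e ∘ s.params)
  else (posSentence s.formula (e ∘ s.params)).not

@[simp]
theorem ParamPosSentence.realize_literal {α : Type*} (e : C → α) (s : ParamPosSentence L C)
    {M : Type*} [L.Structure M] [L[[α]].Structure M] [(L.lhomWithConstants α).IsExpansionOn M] :
    M ⊨ s.literal e ↔
      ((s.formula.Realize fun k => (L.con (e (s.params k)) : M)) ↔ s.formula.Realize s.params) := by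
  rw [literal]
  split_ifs with h <;> simp [h]

/-- `T_i(B) ∪ Diag⁺(B) ∪ {i a = j a} ∪ {b ≠ c : b ∉ i(A), c ∉ j(A)}`, together with the
literals of `l` in `C`. -/
noncomputable def amalgamTheory (l : List (ParamPosSentence L C)) : L[[B ⊕ C]].Theory :=
  (⋃ (n : ℕ) (m : ℕ) (φ : PosForm L (n + m)) (ψ : PosForm L (n + m)) (b : Fin m → B)
      (_ : ∀ v : Fin n → B, φ.Realize (Fin.append v b) → ψ.Realize (Fin.append v b)),
      {hIndSentence φ ψ (.inl ∘ b)}) ∪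
  (⋃ (n : ℕ) (φ : PosForm L n) (b : Fin n → B) (_ : φ.Realize b), {posSentence φ (.inl ∘ b)}) ∪
  (⋃ a, {posSentence (.equal (.var 0) (.var 1)) ![.inl (i a), .inr (j a)]}) ∪
  (⋃ (b) (c) (_ : b ∉ Set.range i) (_ : c ∉ Set.range j),
      {(posSentence (.equal (.var 0) (.var 1)) ![.inl b, .inr c]).not}) ∪
  ⋃ s ∈ l, {s.literal .inr}

theorem model_amalgamTheory_iff (l : List (ParamPosSentence L C)) {M : Type*} [L.Structure M]
    [L[[B ⊕ C]].Structure M] [(L.lhomWithConstants (B ⊕ C)).IsExpansionOn M] :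
    M ⊨ amalgamTheory i j l ↔ IsAmalgamMap i j l fun x => (L.con x : M) := by
  simp only [Theory.model_iff_subset_completeTheory, amalgamTheory, Set.union_subset_iff,
    Set.iUnion_subset_iff, Set.singleton_subset_iff, mem_completeTheory, realize_hIndSentence,
    realize_posSentence, Sentence.realize_not, ParamPosSentence.realize_literal,
    PosForm.Realize, Term.realize, Matrix.cons_val_zero, Matrix.cons_val_one]
  exact ⟨fun ⟨⟨⟨⟨h₁, h₂⟩, h₃⟩, h₄⟩, h₅⟩ => ⟨h₁ _ _, h₂ _, h₃, h₄, h₅⟩,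
    fun ⟨h₁, h₂, h₃, h₄, h₅⟩ => ⟨⟨⟨⟨fun _ _ => h₁, fun _ => h₂⟩, h₃⟩, h₄⟩, h₅⟩⟩

theorem amalgamTheory_mono {l l' : List (ParamPosSentence L C)} (h : l ⊆ l') :
    amalgamTheory i j l ⊆ amalgamTheory i j l' :=
  Set.union_subset_union_right _ (Set.iUnion₂_mono' fun s hs => ⟨s, h hs, le_rfl⟩)

variable {i j}

theorem isAmalgamMap_of_retraction (hi : IsImmersion i) {l : List (ParamPosSentence L C)}
    {ρ : C → A} (hρj : Function.LeftInverse ρ j)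
    (hρ : ∀ s ∈ l, s.formula.Realize (ρ ∘ s.params) ↔ s.formula.Realize s.params) :
    IsAmalgamMap i j l (Sum.elim id (i ∘ ρ)) where
  strong_left _ _ _ h := h
  realize_left _ _ h := h
  comm a := by simp [hρj a]
  disjoint b c hb _ := by simpa using fun h => hb ⟨_, h.symm⟩
  realize_right_iff s hs := (hi _ _).symm.trans (hρ s hs)

theorem amalgamTheory_isSatisfiable [Nonempty A] (hi : IsImmersion i)
    (hj : IsStrongImmersion j) : Theory.IsSatisfiable (⋃ l, amalgamTheory i j l) := by
  refine (Theory.isSatisfiable_directed_union_iff fun l₁ l₂ => ⟨l₁ ++ l₂,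
    amalgamTheory_mono i j (List.subset_append_left _ _),
    amalgamTheory_mono i j (List.subset_append_right _ _)⟩).2 fun l => ?_
  obtain ⟨ρ, hρj, hρ⟩ := hj.exists_retraction l
  let : (constantsOn (B ⊕ C)).Structure B := constantsOn.structure (Sum.elim id (i ∘ ρ))
  have : B ⊨ amalgamTheory i j l :=
    (model_amalgamTheory_iff i j l).2 (isAmalgamMap_of_retraction hi hρj hρ)
  have : Nonempty B := .map i ‹_›
  exact Theory.Model.isSatisfiable B

end AmalgamTheory

/-- strong asymmetric amalgamation of an immersion against a
strong immersion. -/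
theorem strong_asymmetric_amalgamation
    (A B C : Type (max u v)) [L.Structure A] [L.Structure B] [L.Structure C]
    (i : A →[L] B) (j : A →[L] C) (hi : IsImmersion i) (hj : IsStrongImmersion j) :
    ∃ (D : Type (max u v)) (_ : L.Structure D) (f' : B →[L] D) (g' : C →[L] D),
      IsStrongImmersion f' ∧ IsImmersion g' ∧ f'.comp i = g'.comp j ∧
        ∀ b c, b ∉ Set.range i → c ∉ Set.range j → f' b ≠ g' c := by
  rcases isEmpty_or_nonempty A with _ | _
  · exact exists_amalgam_of_isEmpty i j hi hj
  obtain ⟨D⟩ := amalgamTheory_isSatisfiable hi hj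
  let : L.Structure D := (L.lhomWithConstants (B ⊕ C)).reduct D
  have : (L.lhomWithConstants (B ⊕ C)).IsExpansionOn D := LHom.isExpansionOn_reduct _ D
  let ι : B ⊕ C → D := fun x => L.con x
  have hD (l) : IsAmalgamMap i j l ι :=
    (model_amalgamTheory_iff i j l).1 (D.is_model.mono (Set.subset_iUnion _ l))
  have hC {n : ℕ} (φ : PosForm L n) (c : Fin n → C) :=
    (hD [⟨φ, c⟩]).realize_right_iff _ (List.mem_singleton_self _)
  exact ⟨D, _, homOfPreserves (ι ∘ .inl) (hD []).realize_left,
    homOfPreserves (ι ∘ .inr) fun φ c => (hC φ c).2, (hD []).strong_left,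
    fun φ c => (hC φ c).symm, Hom.ext (hD []).comm, (hD []).disjoint⟩
end PositiveLogic
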